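/- Let A_1, ..., A_k be increasing events in a finite product probability space {0,1}^S with product measure. Let X count how many A_i occur, μ = E[X], and Δ = Σ_i Σ_{j~i} Pr(A_i ∩ A_j) over ordered pairs of dependent events. Then for all 0 ≤ t ≤ μ, Pr(X ≤ μ − t) ≤ exp(−t²/(2(μ + Δ))). -/

import Mathlib

/-!
Let `Ψ(θ) = E[exp (-θ X)]`. For `θ ≥ 0` we show `-Ψ'(θ) = E[X exp (-θ X)] ≥ (μ - θ (μ + Δ)) Ψ(θ)`;
integrating gives `Ψ(θ) ≤ exp (-θ μ + θ² (μ + Δ) / 2)`, and Chernoff's bound with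
`θ = t / (μ + Δ)` is the claim.

The derivative bound is the sum over `i` of
`E[1_{A_i} exp (-θ X)] ≥ (P(A_i) - θ (P(A_i) + Δ_i)) Ψ(θ)`.
Split `X = Y + Z`, where `Y` counts `A_i` and the events dependent on it. Harris' inequality with
the one-coordinate correction `p_s (1 - p_s) I_s(f) I_s(g)` shows that two independent increasing
events have no essential coordinate in common, so `Z` is a function of the coordinates inessential
to `A_i`. Harris' inequality conditioned on the coordinates essential to `A_i` then decouples
`exp (-θ Z)` from `1_{A_i} exp (-θ Y)`, and `exp (-θ Y) ≥ 1 - θ Y` finishes. Coordinates with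
`p_s ∈ {0, 1}` make these dependence statements hold only almost surely.
-/

open MeasureTheory Finset Real
open scoped Classical

noncomputable section

lemma Set.indicator_one_nonneg {α : Type*} (B : Set α) : 0 ≤ B.indicator (1 : α → ℝ) :=
  Set.indicator_nonneg fun _ _ => zero_le_one

lemma IsUpperSet.monotone_indicator_one {α : Type*} [Preorder α] {B : Set α} (hB : IsUpperSet B) :
    Monotone (B.indicator (1 : α → ℝ)) := fun a b hab => by
  by_cases ha : a ∈ B
  · simp [ha, hB hab ha]
  · rw [Set.indicator_of_notMem ha]
    exact B.indicator_one_nonneg b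

lemma antitone_exp_neg_mul_sum_indicator {α ι : Type*} [Preorder α] {A : ι → Set α}
    (hA : ∀ i, IsUpperSet (A i)) {θ : ℝ} (hθ : 0 ≤ θ) (I : Finset ι) :
    Antitone fun ω => exp (-θ * ∑ j ∈ I, (A j).indicator 1 ω) :=
  fun _ _ h => exp_le_exp.2 <| mul_le_mul_of_nonpos_left
    (sum_le_sum fun j _ => (hA j).monotone_indicator_one h) (neg_nonpos.2 hθ)

/-- Integrating factor: `F x * exp (a x - b x² / 2)` is nonincreasing on `[0, ∞)`. -/
lemma le_mul_exp_of_hasDerivAt_le {F F' : ℝ → ℝ} {a b : ℝ}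
    (hF : ∀ x, 0 ≤ x → HasDerivAt F (F' x) x) (hF' : ∀ x, 0 ≤ x → F' x ≤ -(a - b * x) * F x)
    {x : ℝ} (hx : 0 ≤ x) : F x ≤ F 0 * exp (-(a * x) + b * x ^ 2 / 2) := by
  have hG (y : ℝ) (hy : 0 ≤ y) : HasDerivAt (fun y => F y * exp (a * y - b * y ^ 2 / 2))
      ((F' y + (a - b * y) * F y) * exp (a * y - b * y ^ 2 / 2)) y := by
    have hu : HasDerivAt (fun y => a * y - b * y ^ 2 / 2) (a - b * y) y :=
      (((hasDerivAt_id' y).const_mul a).fun_sub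
        (((hasDerivAt_pow 2 y).const_mul b).div_const 2)).congr_deriv (by push_cast; ring)
    exact ((hF y hy).fun_mul hu.exp).congr_deriv (by ring)
  have hanti : AntitoneOn (fun y => F y * exp (a * y - b * y ^ 2 / 2)) (Set.Ici 0) := by
    refine antitoneOn_of_deriv_nonpos (convex_Ici 0)
      (fun y hy => (hG y hy).continuousAt.continuousWithinAt) ?_ ?_ <;>
      simp only [interior_Ici, Set.mem_Ioi]
    · exact fun y hy => (hG y hy.le).differentiableAt.differentiableWithinAt
    · intro y hy
      rw [(hG y hy.le).deriv]
      exact mul_nonpos_of_nonpos_of_nonneg (by linarith [hF' y hy.le]) (exp_pos _).le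
  have := hanti Set.self_mem_Ici hx hx
  simp only [mul_zero, ne_eq, OfNat.ofNat_ne_zero, not_false_eq_true, zero_pow, zero_div,
    sub_zero, exp_zero, mul_one] at this
  calc F x = F x * exp (a * x - b * x ^ 2 / 2) * exp (-(a * x) + b * x ^ 2 / 2) := by
        rw [mul_assoc, ← exp_add]; ring_nf; simp
    _ ≤ F 0 * exp (-(a * x) + b * x ^ 2 / 2) :=
        mul_le_mul_of_nonneg_right this (exp_pos _).le

namespace ProductBernoulli

variable {S : Type*} [Fintype S] {p : S → ℝ}

def weight (p : S → ℝ) (ω : S → Bool) : ℝ := ∏ s, bif ω s then p s else 1 - p s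

def expect (p : S → ℝ) (f : (S → Bool) → ℝ) : ℝ := ∑ ω, weight p ω * f ω

def influence (p : S → ℝ) (f : (S → Bool) → ℝ) (s : S) : ℝ :=
  expect p fun ω => f (Function.update ω s true) - f (Function.update ω s false)

def essentialCoords (p : S → ℝ) (f : (S → Bool) → ℝ) : Set S :=
  {s | 0 < p s ∧ p s < 1 ∧ 0 < influence p f s}

def AEDependsOn {β : Type*} (p : S → ℝ) (f : (S → Bool) → β) (T : Set S) : Prop :=
  ∀ ⦃ω ω'⦄, weight p ω ≠ 0 → weight p ω' ≠ 0 → (∀ s ∈ T, ω s = ω' s) → f ω = f ω'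

lemma sum_weight : ∑ ω, weight p ω = 1 := by
  simp only [weight]
  rw [← Fintype.prod_sum fun s (b : Bool) => bif b then p s else 1 - p s]
  simp

lemma weight_mul_weight_of_swap {a b x y : S → Bool}
    (h : ∀ s, (x s = a s ∧ y s = b s) ∨ (x s = b s ∧ y s = a s)) :
    weight p x * weight p y = weight p a * weight p b := by
  simp only [weight, ← prod_mul_distrib]
  refine prod_congr rfl fun s _ => ?_
  rcases h s with ⟨hx, hy⟩ | ⟨hx, hy⟩ <;> rw [hx, hy]
  ring

lemma weight_inf_mul_weight_sup (a b : S → Bool) :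
    weight p (a ⊓ b) * weight p (a ⊔ b) = weight p a * weight p b :=
  weight_mul_weight_of_swap fun s => by cases ha : a s <;> cases hb : b s <;> simp [ha, hb]

lemma weight_piecewise_mul_weight_piecewise (T : Set S) (a b : S → Bool) :
    weight p (T.piecewise a b) * weight p (T.piecewise b a) = weight p a * weight p b :=
  weight_mul_weight_of_swap fun s => by by_cases hs : s ∈ T <;> simp [hs]

lemma weight_piecewise_ne_zero {a b : S → Bool} (ha : weight p a ≠ 0) (hb : weight p b ≠ 0)
    (T : Set S) : weight p (T.piecewise a b) ≠ 0 :=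
  left_ne_zero_of_mul <|
    (weight_piecewise_mul_weight_piecewise T a b).trans_ne (mul_ne_zero ha hb)

lemma weight_update_ne_zero {a b : S → Bool} (ha : weight p a ≠ 0) (hb : weight p b ≠ 0)
    (s : S) : weight p (Function.update a s (b s)) ≠ 0 := by
  simpa [Set.piecewise_singleton] using weight_piecewise_ne_zero hb ha {s}

lemma weight_ne_zero_iff {ω : S → Bool} :
    weight p ω ≠ 0 ↔ ∀ s, (bif ω s then p s else 1 - p s) ≠ 0 := by
  simp [weight, prod_ne_zero_iff]

lemma sum_weight_mul_apply (φ : Bool → ℝ) (s : S) :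
    ∑ ω, weight p ω * φ (ω s) = (1 - p s) * φ false + p s * φ true := by
  have := Fintype.prod_sum fun t (b : Bool) =>
    (bif b then p t else 1 - p t) * if t = s then φ b else 1
  simp only [prod_mul_distrib, prod_ite_eq', mem_univ, if_true] at this
  simp only [weight, ← this, Fintype.sum_bool, mul_ite, mul_one]
  rw [Fintype.prod_eq_single s fun t ht => by simp [ht]]
  simp [add_comm]

lemma expect_const (c : ℝ) : expect p (fun _ => c) = c := by
  simp [expect, ← sum_mul, sum_weight]

lemma expect_sum {ι : Type*} (I : Finset ι) (f : ι → (S → Bool) → ℝ) :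
    expect p (fun ω => ∑ i ∈ I, f i ω) = ∑ i ∈ I, expect p (f i) := by
  simp only [expect, mul_sum]
  exact sum_comm

lemma expect_sub (f g : (S → Bool) → ℝ) :
    expect p (fun ω => f ω - g ω) = expect p f - expect p g := by
  simp only [expect, mul_sub, sum_sub_distrib]

lemma expect_const_mul (c : ℝ) (f : (S → Bool) → ℝ) :
    expect p (fun ω => c * f ω) = c * expect p f := by
  simp only [expect, mul_sum, mul_left_comm]

/-- `(ω, ω') ↦ (T.piecewise ω ω', T.piecewise ω' ω)` is an involution preserving
`weight p ω * weight p ω'`. -/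
lemma expect_eq_sum_sum_piecewise (T : Set S) (f : (S → Bool) → ℝ) :
    expect p f = ∑ ω, ∑ ω', weight p ω * weight p ω' * f (T.piecewise ω ω') := by
  have hσ : Function.Involutive fun x : (S → Bool) × (S → Bool) =>
      (T.piecewise x.1 x.2, T.piecewise x.2 x.1) := fun x => by
    ext s <;> by_cases hs : s ∈ T <;> simp [hs]
  calc expect p f = ∑ x : (S → Bool) × (S → Bool), weight p x.1 * weight p x.2 * f x.1 := by
        simp [Fintype.sum_prod_type, expect, mul_right_comm _ _ (f _), ← mul_sum,
          sum_weight]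
    _ = _ := by
        rw [← Equiv.sum_comp hσ.toPerm, Fintype.sum_prod_type]
        simp [weight_piecewise_mul_weight_piecewise]

lemma expect_eq_update (s : S) (f : (S → Bool) → ℝ) :
    expect p f = (1 - p s) * expect p (fun ω => f (Function.update ω s false))
      + p s * expect p (fun ω => f (Function.update ω s true)) := by
  rw [expect_eq_sum_sum_piecewise {s}]
  simp only [Set.piecewise_singleton, mul_assoc, ← mul_sum]
  exact sum_weight_mul_apply (fun b => expect p fun ω => f (Function.update ω s b)) s

lemma expect_congr_ae {f g : (S → Bool) → ℝ} (h : ∀ ω, weight p ω ≠ 0 → f ω = g ω) :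
    expect p f = expect p g :=
  sum_congr rfl fun ω _ => by
    by_cases hω : weight p ω = 0
    · simp [hω]
    · rw [h ω hω]

lemma expect_mul_eq_of_aeDependsOn {f : (S → Bool) → ℝ} {T : Set S} (hf : AEDependsOn p f T)
    (k : (S → Bool) → ℝ) :
    expect p (f * k) = expect p fun ω => f ω * expect p fun ω' => k (T.piecewise ω ω') := by
  rw [expect_eq_sum_sum_piecewise T]
  refine sum_congr rfl fun ω _ => ?_
  by_cases hω : weight p ω = 0
  · simp [hω]
  simp only [expect, mul_sum]
  refine sum_congr rfl fun ω' _ => ?_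
  by_cases hω' : weight p ω' = 0
  · simp [hω']
  have : f (T.piecewise ω ω') = f ω :=
    hf (weight_piecewise_ne_zero hω hω' T) hω fun s hs => by simp [hs]
  rw [Pi.mul_apply, this]
  ring

section AEDependsOn

variable {β γ : Type*} {f : (S → Bool) → β} {T T' : Set S}

lemma AEDependsOn.mono (hf : AEDependsOn p f T) (h : T ⊆ T') : AEDependsOn p f T' :=
  fun _ _ hω hω' hωω' => hf hω hω' fun s hs => hωω' s (h hs)

lemma AEDependsOn.comp (hf : AEDependsOn p f T) (g : β → γ) : AEDependsOn p (g ∘ f) T :=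
  fun _ _ hω hω' hωω' => congrArg g (hf hω hω' hωω')

lemma aeDependsOn_sum {ι : Type*} {I : Finset ι} {f : ι → (S → Bool) → ℝ}
    (hf : ∀ i ∈ I, AEDependsOn p (f i) T) : AEDependsOn p (fun ω => ∑ i ∈ I, f i ω) T :=
  fun _ _ hω hω' hωω' => sum_congr rfl fun i hi => hf i hi hω hω' hωω'

lemma aeDependsOn_of_update
    (hf : ∀ ω s b, weight p ω ≠ 0 → weight p (Function.update ω s b) ≠ 0 → s ∉ T →
      f (Function.update ω s b) = f ω) :
    AEDependsOn p f T := by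
  intro ω ω' hω hω' hωω'
  suffices ∀ D : Finset S, (∀ s ∈ D, s ∉ T) → ∀ ω, weight p ω ≠ 0 → (∀ s ∉ D, ω s = ω' s) →
      f ω = f ω' from
    this (Tᶜ.toFinset) (by simp) ω hω fun s hs => hωω' s (by simpa using hs)
  intro D
  induction D using Finset.induction with
  | empty => exact fun _ ω _ h => congrArg f (funext fun s => h s (notMem_empty s))
  | insert a D _ ih =>
    intro hDT ω hω hωD
    have hω₁ := weight_update_ne_zero hω hω' a
    rw [← hf ω a _ hω hω₁ (hDT a (mem_insert_self a D))]
    refine ih (fun s hs => hDT s (mem_insert_of_mem hs)) _ hω₁ fun s hs => ?_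
    by_cases hsa : s = a
    · simp [hsa]
    · simpa [hsa] using hωD s (by simp [hsa, hs])

end AEDependsOn

section Nonneg

variable (hp₀ : ∀ s, 0 ≤ p s) (hp₁ : ∀ s, p s ≤ 1)
include hp₀ hp₁

lemma weight_nonneg (ω : S → Bool) : 0 ≤ weight p ω :=
  prod_nonneg fun s _ => by cases ω s <;> simp [hp₀ s, hp₁ s]

lemma expect_mono {f g : (S → Bool) → ℝ} (h : f ≤ g) : expect p f ≤ expect p g :=
  sum_le_sum fun ω _ => mul_le_mul_of_nonneg_left (h ω) (weight_nonneg hp₀ hp₁ ω)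

lemma expect_nonneg {f : (S → Bool) → ℝ} (h : 0 ≤ f) : 0 ≤ expect p f :=
  (expect_const (p := p) 0).symm.trans_le (expect_mono hp₀ hp₁ h)

/-- Harris' inequality, as the FKG inequality for the log-modular weight of a product measure. -/
lemma expect_mul_expect_le_of_monotone {f g : (S → Bool) → ℝ} (hf : Monotone f)
    (hg : Monotone g) (hf₀ : 0 ≤ f) (hg₀ : 0 ≤ g) :
    expect p f * expect p g ≤ expect p (f * g) := by
  simpa [expect, sum_weight] using
    fkg (μ := weight p) f g (weight_nonneg hp₀ hp₁) hf₀ hg₀ hf hg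
      fun a b => (weight_inf_mul_weight_sup a b).ge

lemma expect_mul_expect_le_of_antitone {f g : (S → Bool) → ℝ} (hf : Antitone f)
    (hg : Antitone g) (hf₀ : 0 ≤ f) (hg₀ : 0 ≤ g) :
    expect p f * expect p g ≤ expect p (f * g) := by
  have h := fkg (α := (S → Bool)ᵒᵈ) (μ := weight p ∘ OrderDual.ofDual)
    (f ∘ OrderDual.ofDual) (g ∘ OrderDual.ofDual) (fun a => weight_nonneg hp₀ hp₁ _)
    (fun a => hf₀ _) (fun a => hg₀ _) hf.dual_left hg.dual_left
    fun a b => (weight_inf_mul_weight_sup (p := p) a.ofDual b.ofDual).ge.trans_eq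
      (mul_comm _ _)
  rwa [show ∑ a : (S → Bool)ᵒᵈ, (weight p ∘ OrderDual.ofDual) a = 1 from sum_weight,
    one_mul] at h

/-- Harris' inequality conditioned on the coordinates in `T`: it holds fibrewise, and `h` is
independent of the fibre. -/
lemma expect_mul_mul_expect_le {T : Set S} {f g h : (S → Bool) → ℝ} (hf₀ : 0 ≤ f)
    (hfT : AEDependsOn p f T) (hg : Antitone g) (hg₀ : 0 ≤ g) (hh : Antitone h) (hh₀ : 0 ≤ h)
    (hhT : AEDependsOn p h Tᶜ) :
    expect p (f * g) * expect p h ≤ expect p (f * (g * h)) := by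
  have hgω (ω : S → Bool) : Antitone fun ω' => g (T.piecewise ω ω') :=
    hg.comp_monotone fun _ _ h' => Set.piecewise_mono (fun _ _ => le_rfl) fun i _ => h' i
  rw [expect_mul_eq_of_aeDependsOn hfT, expect_mul_eq_of_aeDependsOn hfT, mul_comm,
    ← expect_const_mul]
  calc expect p (fun ω => expect p h * (f ω * expect p fun ω' => g (T.piecewise ω ω')))
      ≤ expect p (fun ω => f ω * expect p ((fun ω' => g (T.piecewise ω ω')) * h)) :=
        expect_mono hp₀ hp₁ fun ω => by
          rw [mul_left_comm, mul_comm (expect p h)]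
          exact mul_le_mul_of_nonneg_left (expect_mul_expect_le_of_antitone hp₀ hp₁ (hgω ω) hh
            (fun ω' => hg₀ (T.piecewise ω ω')) hh₀) (hf₀ ω)
    _ = _ := expect_congr_ae fun ω hω => by
        congr 1
        refine expect_congr_ae fun ω' hω' => ?_
        rw [Pi.mul_apply, Pi.mul_apply, hhT hω' (weight_piecewise_ne_zero hω hω' T)
          fun s hs => (Set.piecewise_eq_of_notMem _ _ _ hs).symm]

lemma mul_influence_mul_influence_le {f g : (S → Bool) → ℝ} (hf : Monotone f)
    (hg : Monotone g) (hf₀ : 0 ≤ f) (hg₀ : 0 ≤ g) (s : S) :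
    p s * (1 - p s) * (influence p f s * influence p g s)
      ≤ expect p (f * g) - expect p f * expect p g := by
  have hupd (b : Bool) : Monotone fun ω : S → Bool => Function.update ω s b := fun _ _ h =>
    update_le_update_iff.2 ⟨le_rfl, fun j _ => h j⟩
  have harris (b : Bool) : (expect p fun ω => f (Function.update ω s b)) *
      (expect p fun ω => g (Function.update ω s b)) ≤
      expect p fun ω => (f * g) (Function.update ω s b) :=
    expect_mul_expect_le_of_monotone hp₀ hp₁ (hf.comp (hupd b)) (hg.comp (hupd b))
      (fun ω => hf₀ (Function.update ω s b)) (fun ω => hg₀ (Function.update ω s b))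
  rw [influence, influence, expect_sub, expect_sub, expect_eq_update s f, expect_eq_update s g,
    expect_eq_update s (f * g)]
  nlinarith [mul_le_mul_of_nonneg_left (harris false) (sub_nonneg.2 (hp₁ s)),
    mul_le_mul_of_nonneg_left (harris true) (hp₀ s)]

lemma disjoint_essentialCoords {f g : (S → Bool) → ℝ} (hf : Monotone f) (hg : Monotone g)
    (hf₀ : 0 ≤ f) (hg₀ : 0 ≤ g) (hfg : expect p (f * g) = expect p f * expect p g) :
    Disjoint (essentialCoords p f) (essentialCoords p g) :=
  Set.disjoint_left.2 fun s ⟨hs₀, hs₁, hfs⟩ ⟨_, _, hgs⟩ => by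
    have := mul_influence_mul_influence_le hp₀ hp₁ hf hg hf₀ hg₀ s
    rw [hfg, sub_self] at this
    exact this.not_gt (mul_pos (mul_pos hs₀ (sub_pos.2 hs₁)) (mul_pos hfs hgs))

lemma update_eq_of_notMem_essentialCoords {f : (S → Bool) → ℝ} (hf : Monotone f)
    {ω : S → Bool} {s : S} {b : Bool} (hω : weight p ω ≠ 0)
    (hωb : weight p (Function.update ω s b) ≠ 0)
    (hs : s ∉ essentialCoords p f) : f (Function.update ω s b) = f ω := by
  suffices hb : b = ω s ∨ f (Function.update ω s true) = f (Function.update ω s false) by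
    rcases hb with rfl | hb
    · rw [Function.update_eq_self]
    · conv_rhs => rw [← Function.update_eq_self s ω]
      cases b <;> cases ω s <;> simp [hb]
  simp only [essentialCoords, Set.mem_ofPred_eq, not_and, not_lt] at hs
  by_cases hps : 0 < p s ∧ p s < 1
  · have hdiff (ω : S → Bool) :
        0 ≤ f (Function.update ω s true) - f (Function.update ω s false) :=
      sub_nonneg.2 <| hf <| update_le_update_iff.2 ⟨Bool.false_le _, fun _ _ => le_rfl⟩
    have hzero := (sum_eq_zero_iff_of_nonneg fun ω _ =>
      mul_nonneg (weight_nonneg hp₀ hp₁ ω) (hdiff ω)).1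
      ((hs hps.1 hps.2).antisymm (expect_nonneg hp₀ hp₁ hdiff)) ω (mem_univ ω)
    exact Or.inr (sub_eq_zero.1 ((mul_eq_zero.1 hzero).resolve_left hω))
  · left
    have h₁ := weight_ne_zero_iff.1 hω s
    have h₂ := weight_ne_zero_iff.1 hωb s
    rw [Function.update_self] at h₂
    have hdeg : p s = 0 ∨ p s = 1 := by
      by_contra! h
      exact hps ⟨(hp₀ s).lt_of_ne' h.1, (hp₁ s).lt_of_ne h.2⟩
    revert h₁ h₂
    cases b <;> cases ω s <;> rcases hdeg with h | h <;> simp [h]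

lemma aeDependsOn_essentialCoords {f : (S → Bool) → ℝ} (hf : Monotone f) :
    AEDependsOn p f (essentialCoords p f) :=
  aeDependsOn_of_update fun _ _ _ hω hωb hs =>
    update_eq_of_notMem_essentialCoords hp₀ hp₁ hf hω hωb hs

lemma expect_indicator_setOf_le_le (X : (S → Bool) → ℝ) (a : ℝ) {θ : ℝ} (hθ : 0 ≤ θ) :
    expect p ({ω | X ω ≤ a}.indicator 1)
      ≤ exp (θ * a) * expect p (fun ω => exp (-θ * X ω)) := by
  rw [← expect_const_mul]
  refine expect_mono hp₀ hp₁ fun ω => ?_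
  rw [← exp_add]
  by_cases hω : X ω ≤ a
  · simpa [hω] using mul_le_mul_of_nonneg_left hω hθ
  · simp [hω, (exp_pos _).le]

lemma expect_sub_mul_le_expect_mul_exp {f Y : (S → Bool) → ℝ} (hf₀ : 0 ≤ f) (θ : ℝ) :
    expect p f - θ * expect p (fun ω => f ω * Y ω) ≤ expect p (f * fun ω => exp (-θ * Y ω)) := by
  rw [← expect_const_mul, ← expect_sub]
  refine expect_mono hp₀ hp₁ fun ω => ?_
  have := add_one_le_exp (-θ * Y ω)
  rw [Pi.mul_apply, ← mul_left_comm, ← mul_one_sub]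
  exact mul_le_mul_of_nonneg_left (by linarith) (hf₀ ω)

end Nonneg

section Janson

variable {ι : Type*} [Fintype ι]

def count (A : ι → Set (S → Bool)) (ω : S → Bool) : ℝ := ∑ i, (A i).indicator 1 ω

def meanCount (p : S → ℝ) (A : ι → Set (S → Bool)) : ℝ := ∑ i, expect p ((A i).indicator 1)

def jansonDelta (p : S → ℝ) (A : ι → Set (S → Bool)) (r : ι → ι → Prop) : ℝ :=
  ∑ i, ∑ j ∈ univ.filter (r i), expect p ((A i ∩ A j).indicator 1)

variable (hp₀ : ∀ s, 0 ≤ p s) (hp₁ : ∀ s, p s ≤ 1) {A : ι → Set (S → Bool)}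
  (hA : ∀ i, IsUpperSet (A i)) {r : ι → ι → Prop}
  (hr : ∀ i j, i ≠ j → ¬ r i j → expect p ((A i ∩ A j).indicator 1)
    = expect p ((A i).indicator 1) * expect p ((A j).indicator 1))
include hp₀ hp₁

lemma expect_indicator_mul_sum_le (i : ι) :
    expect p (fun ω => (A i).indicator 1 ω * ∑ j ∈ insert i (univ.filter (r i)),
        (A j).indicator 1 ω)
      ≤ expect p ((A i).indicator 1)
        + ∑ j ∈ univ.filter (r i), expect p ((A i ∩ A j).indicator 1) := by
  have hinter (j : ι) : expect p (fun ω => (A i).indicator 1 ω * (A j).indicator 1 ω)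
      = expect p ((A i ∩ A j).indicator 1) := by
    rw [Set.inter_indicator_one]; rfl
  simp only [mul_sum, expect_sum, hinter]
  by_cases hi : i ∈ univ.filter (r i)
  · rw [insert_eq_of_mem hi]
    exact le_add_of_nonneg_left (expect_nonneg hp₀ hp₁ (Set.indicator_one_nonneg _))
  · rw [sum_insert hi, Set.inter_self]

include hA hr

lemma aeDependsOn_sum_indicator_compl (i : ι) :
    AEDependsOn p
      (fun ω => ∑ j ∈ (insert i (univ.filter (r i)))ᶜ, (A j).indicator 1 ω : (S → Bool) → ℝ)
      (essentialCoords p ((A i).indicator 1))ᶜ := by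
  refine aeDependsOn_sum fun j hj => (aeDependsOn_essentialCoords hp₀ hp₁
    (hA j).monotone_indicator_one).mono (Disjoint.subset_compl_left ?_)
  simp only [mem_compl, mem_insert, mem_filter, mem_univ, true_and, not_or] at hj
  refine disjoint_essentialCoords hp₀ hp₁ (hA i).monotone_indicator_one
    (hA j).monotone_indicator_one (Set.indicator_one_nonneg _)
    (Set.indicator_one_nonneg _) ?_
  rw [← Set.inter_indicator_one]
  exact hr i j (Ne.symm hj.1) hj.2

lemma expect_indicator_mul_exp_ge (i : ι) {θ : ℝ} (hθ : 0 ≤ θ) :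
    (expect p ((A i).indicator 1)
        - θ * (expect p ((A i).indicator 1)
          + ∑ j ∈ univ.filter (r i), expect p ((A i ∩ A j).indicator 1)))
      * expect p (fun ω => exp (-θ * count A ω))
    ≤ expect p (fun ω => (A i).indicator 1 ω * exp (-θ * count A ω)) := by
  set N := insert i (univ.filter (r i))
  set f : (S → Bool) → ℝ := (A i).indicator 1
  set Y : (S → Bool) → ℝ := fun ω => ∑ j ∈ N, (A j).indicator 1 ω
  set Z : (S → Bool) → ℝ := fun ω => ∑ j ∈ Nᶜ, (A j).indicator 1 ω
  have hf₀ : 0 ≤ f := Set.indicator_one_nonneg _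
  have hY₀ (ω : S → Bool) : 0 ≤ Y ω := sum_nonneg fun j _ => Set.indicator_one_nonneg _ ω
  have hcount (ω : S → Bool) : count A ω = Y ω + Z ω := (sum_add_sum_compl N _).symm
  have hexp₀ (U : (S → Bool) → ℝ) : 0 ≤ fun ω => exp (-θ * U ω) := fun ω => (exp_pos _).le
  have hΨ₀ := expect_nonneg hp₀ hp₁ (hexp₀ (count A))
  have hharris : expect p (f * fun ω => exp (-θ * Y ω)) * expect p (fun ω => exp (-θ * Z ω))
      ≤ expect p (fun ω => f ω * exp (-θ * count A ω)) := by
    refine (expect_mul_mul_expect_le hp₀ hp₁ hf₀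
      (aeDependsOn_essentialCoords hp₀ hp₁ (hA i).monotone_indicator_one)
      (antitone_exp_neg_mul_sum_indicator hA hθ N) (hexp₀ Y)
      (antitone_exp_neg_mul_sum_indicator hA hθ Nᶜ) (hexp₀ Z)
      ((aeDependsOn_sum_indicator_compl hp₀ hp₁ hA hr i).comp fun z => exp (-θ * z))).trans_eq ?_
    congr 1
    ext ω
    rw [Pi.mul_apply, Pi.mul_apply, hcount, mul_add, exp_add]
  have hZ : expect p (fun ω => exp (-θ * count A ω)) ≤ expect p (fun ω => exp (-θ * Z ω)) :=
    expect_mono hp₀ hp₁ fun ω => exp_le_exp.2 (by nlinarith [hcount ω, hY₀ ω])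
  have hΔ : expect p (fun ω => f ω * Y ω)
      ≤ expect p f + ∑ j ∈ univ.filter (r i), expect p ((A i ∩ A j).indicator 1) :=
    expect_indicator_mul_sum_le hp₀ hp₁ i
  calc _ ≤ (expect p f - θ * expect p (fun ω => f ω * Y ω))
          * expect p (fun ω => exp (-θ * count A ω)) :=
        mul_le_mul_of_nonneg_right (by nlinarith [mul_le_mul_of_nonneg_left hΔ hθ]) hΨ₀
    _ ≤ expect p (f * fun ω => exp (-θ * Y ω)) * expect p (fun ω => exp (-θ * count A ω)) :=
        mul_le_mul_of_nonneg_right (expect_sub_mul_le_expect_mul_exp hp₀ hp₁ hf₀ θ) hΨ₀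
    _ ≤ expect p (f * fun ω => exp (-θ * Y ω)) * expect p (fun ω => exp (-θ * Z ω)) :=
        mul_le_mul_of_nonneg_left hZ
          (expect_nonneg hp₀ hp₁ fun ω => mul_nonneg (hf₀ ω) (hexp₀ Y ω))
    _ ≤ _ := hharris

lemma meanCount_sub_mul_le {θ : ℝ} (hθ : 0 ≤ θ) :
    (meanCount p A - θ * (meanCount p A + jansonDelta p A r))
        * expect p (fun ω => exp (-θ * count A ω))
      ≤ expect p (fun ω => count A ω * exp (-θ * count A ω)) :=
  calc _ = ∑ i, (expect p ((A i).indicator 1)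
          - θ * (expect p ((A i).indicator 1)
            + ∑ j ∈ univ.filter (r i), expect p ((A i ∩ A j).indicator 1)))
        * expect p (fun ω => exp (-θ * count A ω)) := by
        simp only [meanCount, jansonDelta, ← sum_add_distrib, mul_sum, ← sum_sub_distrib,
          sum_mul]
    _ ≤ ∑ i, expect p (fun ω => (A i).indicator 1 ω * exp (-θ * count A ω)) :=
        sum_le_sum fun i _ => expect_indicator_mul_exp_ge hp₀ hp₁ hA hr i hθ
    _ = _ := by rw [← expect_sum]; simp only [count, sum_mul]

lemma expect_exp_neg_mul_count_le {θ : ℝ} (hθ : 0 ≤ θ) :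
    expect p (fun ω => exp (-θ * count A ω))
      ≤ exp (-(meanCount p A * θ) + (meanCount p A + jansonDelta p A r) * θ ^ 2 / 2) := by
  have hderiv (θ : ℝ) : HasDerivAt (fun θ => expect p fun ω => exp (-θ * count A ω))
      (-expect p fun ω => count A ω * exp (-θ * count A ω)) θ := by
    simp only [expect, ← sum_neg_distrib]
    exact HasDerivAt.fun_sum fun ω _ =>
      (((hasDerivAt_neg θ).mul_const _).exp.const_mul _).congr_deriv (by ring)
  have := le_mul_exp_of_hasDerivAt_le (a := meanCount p A)
    (b := meanCount p A + jansonDelta p A r) (fun θ _ => hderiv θ)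
    (fun θ hθ => by linarith [meanCount_sub_mul_le hp₀ hp₁ hA hr hθ]) hθ
  simpa [expect_const] using this

theorem expect_indicator_count_le_sub_le {t : ℝ} (ht : 0 ≤ t) :
    expect p ({ω | count A ω ≤ meanCount p A - t}.indicator 1)
      ≤ exp (-(t ^ 2) / (2 * (meanCount p A + jansonDelta p A r))) := by
  set μ := meanCount p A
  set Δ := jansonDelta p A r
  have hind₀ (B : Set (S → Bool)) : 0 ≤ expect p (B.indicator 1) :=
    expect_nonneg hp₀ hp₁ (Set.indicator_one_nonneg _)
  have hμΔ : 0 ≤ μ + Δ := add_nonneg (sum_nonneg fun i _ => hind₀ _)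
    (sum_nonneg fun i _ => sum_nonneg fun j _ => hind₀ _)
  rcases hμΔ.eq_or_lt with h | h
  · rw [← h, mul_zero, div_zero, exp_zero, ← expect_const (p := p) 1]
    exact expect_mono hp₀ hp₁ (Set.indicator_le_self' fun _ _ => zero_le_one)
  set θ := t / (μ + Δ)
  have hθ : 0 ≤ θ := div_nonneg ht h.le
  calc _ ≤ exp (θ * (μ - t)) * expect p (fun ω => exp (-θ * count A ω)) :=
        expect_indicator_setOf_le_le hp₀ hp₁ _ _ hθ
    _ ≤ exp (θ * (μ - t)) * exp (-(μ * θ) + (μ + Δ) * θ ^ 2 / 2) :=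
        mul_le_mul_of_nonneg_left (expect_exp_neg_mul_count_le hp₀ hp₁ hA hr hθ) (exp_pos _).le
    _ = _ := by
        rw [← exp_add]
        congr 1
        simp only [θ]
        field_simp
        ring

end Janson

lemma toReal_measure_pi_eq_expect (μs : S → Measure Bool) [∀ s, IsProbabilityMeasure (μs s)]
    (B : Set (S → Bool)) :
    (Measure.pi μs B).toReal = expect (fun s => (μs s {true}).toReal) (B.indicator 1) := by
  have hcoord (s : S) (b : Bool) :
      (μs s {b}).toReal = bif b then (μs s {true}).toReal else 1 - (μs s {true}).toReal := by
    cases b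
    · rw [show ({false} : Set Bool) = {true}ᶜ by ext; simp]
      exact probReal_compl_eq_one_sub (measurableSet_singleton _)
    · rfl
  rw [← Set.coe_toFinset B, ← sum_measure_singleton,
    ENNReal.toReal_sum fun _ _ => measure_ne_top _ _]
  simp only [Measure.pi_singleton, ENNReal.toReal_prod, expect, weight, Set.indicator_apply,
    Pi.one_apply, mul_ite, mul_one, mul_zero, sum_ite, sum_const_zero, add_zero]
  exact sum_congr (by ext; simp) fun ω _ => prod_congr rfl fun s _ => hcoord s (ω s)

end ProductBernoulli

open ProductBernoulli in
theorem janson_lower_tail_increasing_general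
    {S : Type*} [Fintype S] (μs : S → Measure Bool) [∀ s, IsProbabilityMeasure (μs s)]
    (k : ℕ) (A : Fin k → Set (S → Bool))
    (hAinc : ∀ i, ∀ ω ω' : S → Bool, (∀ s, ω s ≤ ω' s) → ω ∈ A i → ω' ∈ A i)
    (sim : Fin k → Fin k → Prop)
    (hsim : ∀ i j, sim i j ↔ i ≠ j ∧
      Measure.pi μs (A i ∩ A j) ≠ Measure.pi μs (A i) * Measure.pi μs (A j))
    (X : (S → Bool) → ℝ)
    (hX : ∀ ω, X ω = ∑ i : Fin k, if ω ∈ A i then (1 : ℝ) else 0)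
    (μ Δ : ℝ)
    (hμ : μ = ∑ i : Fin k, (Measure.pi μs (A i)).toReal)
    (hΔ : Δ = ∑ i : Fin k, ∑ j ∈ Finset.univ.filter (fun j => sim i j),
        (Measure.pi μs (A i ∩ A j)).toReal) :
    ∀ t : ℝ, 0 ≤ t → t ≤ μ →
      (Measure.pi μs {ω | X ω ≤ μ - t}).toReal ≤ Real.exp (-(t ^ 2) / (2 * (μ + Δ))) := by
  intro t ht _
  have hP := toReal_measure_pi_eq_expect μs
  have hX' : X = count A := funext fun ω => by simp [hX, count, Set.indicator_apply]
  subst hX' hμ hΔ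
  simp only [hP]
  refine expect_indicator_count_le_sub_le (fun s => ENNReal.toReal_nonneg)
    (fun s => measureReal_le_one) (fun i _ _ => hAinc i _ _) (fun i j hij hnot => ?_) ht
  rw [← hP, ← hP, ← hP, ← ENNReal.toReal_mul, not_not.1 fun h => hnot ((hsim i j).2 ⟨hij, h⟩)]

/-- The lower-tail Janson inequality `Pr(X ≤ μ − t) ≤ exp(−t²/(2(μ+Δ)))` for counts of
increasing events in a finite product probability space `{0,1}^S`. -/
theorem janson_lower_tail_increasing
    {S : Type*} [Fintype S] (μs : S → Measure Bool) [∀ s, IsProbabilityMeasure (μs s)]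
    (k : ℕ) (A : Fin k → Set (S → Bool))
    (hAinc : ∀ i, ∀ ω ω' : S → Bool, (∀ s, ω s ≤ ω' s) → ω ∈ A i → ω' ∈ A i)
    (hAmeas : ∀ i, MeasurableSet (A i))
    (sim : Fin k → Fin k → Prop)
    (hsim : ∀ i j, sim i j ↔ i ≠ j ∧
      Measure.pi μs (A i ∩ A j) ≠ Measure.pi μs (A i) * Measure.pi μs (A j))
    (X : (S → Bool) → ℝ)
    (hX : ∀ ω, X ω = ∑ i : Fin k, if ω ∈ A i then (1 : ℝ) else 0)
    (μ Δ : ℝ)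
    (hμ : μ = ∑ i : Fin k, (Measure.pi μs (A i)).toReal)
    (hΔ : Δ = ∑ i : Fin k, ∑ j ∈ Finset.univ.filter (fun j => sim i j),
        (Measure.pi μs (A i ∩ A j)).toReal) :
    ∀ t : ℝ, 0 ≤ t → t ≤ μ →
      (Measure.pi μs {ω | X ω ≤ μ - t}).toReal ≤ Real.exp (-(t ^ 2) / (2 * (μ + Δ))) :=
  janson_lower_tail_increasing_general μs k A hAinc sim hsim X hX μ Δ hμ hΔ
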